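/- arXiv:2304.12955 — 2 statements merged into one kernel-verified Lean document; each statement's English description precedes it below -/
import Mathlib

section
/- Let G be a context-free grammar in Greibach normal form. Let G' be the grammar obtained from G by replacing every rule of the form A → a A₁ A₂ ⋯ A_m with m ≥ 1 by the set of all rules A → a b B₁ ⋯ B_ℓ A₂ ⋯ A_m such that A₁ → b B₁ ⋯ B_ℓ is a rule of G (discarding the original rule), while keeping all rules of the forms S → ε and A → a unchanged. Then L(G') = L(G), and G' is in 2-Greibach normal form. -/
/-!
Every rule of `G'` is a two-step derivation of `G`: `A ⇒ a A₁ A₂⋯A_m ⇒ a b B₁⋯B_ℓ A₂⋯A_m`,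
so `L(G') ⊆ L(G)`. Conversely, let `A ⇒* w` in `G` start with a rule `A → a A₁⋯A_m`, `m ≥ 1`.
Derivations of a concatenation split into derivations of the factors, so `A₁` derives a
subword of `w`, and its first rule is some `A₁ → b B₁⋯B_ℓ` (not `S → ε`, since `S` occurs on
no right-hand side). Applying both rules at once is one step of `G'`, after which the
variables `B₁⋯B_ℓ A₂⋯A_m` derive in `G` a word shorter than `w`; strong induction on `|w|`
finishes the proof. The 2-GNF shape of `G'` is read off its rules.
-/

/-- A context-free grammar is in *Greibach normal form* if its start variable does not
appear on the right-hand side of any rule, and every rule has one of the forms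
`S → ε` or `A → a B₁⋯B_p` with `p ≥ 0`, where `a` is a terminal and
`A, B₁, …, B_p` are variables. -/
def ContextFreeGrammar.InGNF {T : Type} (G : ContextFreeGrammar T) : Prop :=
  (∀ r ∈ G.rules, Symbol.nonterminal G.initial ∉ r.output) ∧
  ∀ r ∈ G.rules,
    (r.input = G.initial ∧ r.output = []) ∨
    (∃ (a : T) (Bs : List G.NT),
      r.output = Symbol.terminal a :: Bs.map Symbol.nonterminal)

/-- A context-free grammar is in *2-Greibach normal form* if its start variable does not
appear on the right-hand side of any rule, and every rule has one of the forms
`S → ε`, `A → a`, or `A → a b B₁⋯B_p` with `p ≥ 0`, where `a, b` are terminals and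
`A, B₁, …, B_p` are variables. -/
def ContextFreeGrammar.InTwoGNF {T : Type} (G : ContextFreeGrammar T) : Prop :=
  (∀ r ∈ G.rules, Symbol.nonterminal G.initial ∉ r.output) ∧
  ∀ r ∈ G.rules,
    (r.input = G.initial ∧ r.output = []) ∨
    (∃ a : T, r.output = [Symbol.terminal a]) ∨
    (∃ (a b : T) (Bs : List G.NT),
      r.output = Symbol.terminal a :: Symbol.terminal b :: Bs.map Symbol.nonterminal)

namespace ContextFreeRule

variable {T N : Type} {r : ContextFreeRule T N}

lemma Rewrites.append_cases {p q w : List (Symbol T N)} (h : r.Rewrites (p ++ q) w) :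
    (∃ p', r.Rewrites p p' ∧ w = p' ++ q) ∨ (∃ q', r.Rewrites q q' ∧ w = p ++ q') := by
  induction p generalizing w with
  | nil => exact .inr ⟨w, h, rfl⟩
  | cons s p ih =>
    cases h with
    | head => exact .inl ⟨_, .head p, by simp⟩
    | cons _ h =>
      rcases ih h with ⟨p', hp, rfl⟩ | ⟨q', hq, rfl⟩
      · exact .inl ⟨s :: p', hp.cons s, rfl⟩
      · exact .inr ⟨q', hq, rfl⟩

lemma rewrites_singleton_nonterminal {A : N} {v : List (Symbol T N)}
    (h : r.Rewrites [.nonterminal A] v) : r.input = A ∧ v = r.output := by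
  cases h with
  | head => simp
  | cons _ h => nomatch h

end ContextFreeRule

namespace ContextFreeGrammar

variable {T : Type} {g : ContextFreeGrammar T}

lemma Derives.append {u v x y : List (Symbol T g.NT)} (hux : g.Derives u x)
    (hvy : g.Derives v y) : g.Derives (u ++ v) (x ++ y) :=
  (hux.append_right v).trans (hvy.append_left x)

lemma Derives.append_cases {p q w : List (Symbol T g.NT)} (h : g.Derives (p ++ q) w) :
    ∃ w₁ w₂, w = w₁ ++ w₂ ∧ g.Derives p w₁ ∧ g.Derives q w₂ := by
  induction h with
  | refl => exact ⟨p, q, rfl, .refl p, .refl q⟩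
  | tail _ hstep ih =>
    obtain ⟨w₁, w₂, rfl, h₁, h₂⟩ := ih
    obtain ⟨r, hr, hrw⟩ := hstep
    rcases hrw.append_cases with ⟨w₁', hw₁, rfl⟩ | ⟨w₂', hw₂, rfl⟩
    · exact ⟨w₁', w₂, rfl, h₁.trans_produces ⟨r, hr, hw₁⟩, h₂⟩
    · exact ⟨w₁, w₂', rfl, h₁, h₂.trans_produces ⟨r, hr, hw₂⟩⟩

lemma Derives.eq_of_map_terminal {u : List T} {v : List (Symbol T g.NT)}
    (h : g.Derives (u.map .terminal) v) : v = u.map .terminal := by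
  induction h with
  | refl => rfl
  | tail _ hstep ih =>
    obtain ⟨r, -, hr⟩ := ih ▸ hstep.exists_nonterminal_input_mem
    simp at hr

lemma Derives.append_cases_map_terminal {p q : List (Symbol T g.NT)} {w : List T}
    (h : g.Derives (p ++ q) (w.map .terminal)) :
    ∃ w₁ w₂, w = w₁ ++ w₂ ∧ g.Derives p (w₁.map .terminal) ∧ g.Derives q (w₂.map .terminal) := by
  obtain ⟨v₁, v₂, hw, h₁, h₂⟩ := h.append_cases
  obtain ⟨w₁, w₂, rfl, rfl, rfl⟩ := List.map_eq_append_iff.mp hw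
  exact ⟨w₁, w₂, rfl, h₁, h₂⟩

lemma Derives.exists_of_terminal_cons {a : T} {u : List (Symbol T g.NT)} {w : List T}
    (h : g.Derives (.terminal a :: u) (w.map .terminal)) :
    ∃ w', w = a :: w' ∧ g.Derives u (w'.map .terminal) := by
  obtain ⟨w₁, w', rfl, h₁, h'⟩ := Derives.append_cases_map_terminal (p := [.terminal a]) h
  have : w₁ = [a] :=
    List.map_injective_iff.2 (fun _ _ ↦ Symbol.terminal.inj) (h₁.eq_of_map_terminal (u := [a]))
  exact ⟨w', by simp [this], h'⟩

lemma Derives.exists_rule_of_nonterminal {A : g.NT} {w : List T}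
    (h : g.Derives [.nonterminal A] (w.map .terminal)) :
    ∃ r ∈ g.rules, r.input = A ∧ g.Derives r.output (w.map .terminal) := by
  rcases h.eq_or_head with heq | ⟨v, ⟨r, hr, hrw⟩, hv⟩
  · cases w <;> simp at heq
  · obtain ⟨hA, rfl⟩ := ContextFreeRule.rewrites_singleton_nonterminal hrw
    exact ⟨r, hr, hA, hv⟩

lemma produces_input_output {r : ContextFreeRule T g.NT} (hr : r ∈ g.rules) :
    g.Produces [.nonterminal r.input] r.output :=
  ⟨r, hr, .input_output⟩

end ContextFreeGrammar

open ContextFreeGrammar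

variable {T N : Type}

lemma ContextFreeGrammar.Derives.of_forall_rule_derives {S S' : N}
    {R R' : Finset (ContextFreeRule T N)}
    (hR : ∀ r ∈ R', (⟨N, S, R⟩ : ContextFreeGrammar T).Derives [.nonterminal r.input] r.output)
    {u v : List (Symbol T N)} (h : (⟨N, S', R'⟩ : ContextFreeGrammar T).Derives u v) :
    (⟨N, S, R⟩ : ContextFreeGrammar T).Derives u v := by
  induction h with
  | refl => rfl
  | tail _ hstep ih =>
    obtain ⟨r, hr, hrw⟩ := hstep
    obtain ⟨p, q, rfl, rfl⟩ := hrw.exists_parts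
    exact ih.trans (((hR r hr).append_left p).append_right q)

lemma ContextFreeGrammar.derives_map_nonterminal_of_forall {S S' : N}
    {R R' : Finset (ContextFreeRule T N)} {n : ℕ}
    (hn : ∀ (B : N) (v : List T), v.length ≤ n →
      (⟨N, S, R⟩ : ContextFreeGrammar T).Derives [.nonterminal B] (v.map .terminal) →
      (⟨N, S', R'⟩ : ContextFreeGrammar T).Derives [.nonterminal B] (v.map .terminal))
    {Bs : List N} {w : List T} (hw : w.length ≤ n)
    (h : (⟨N, S, R⟩ : ContextFreeGrammar T).Derives (Bs.map .nonterminal) (w.map .terminal)) :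
    (⟨N, S', R'⟩ : ContextFreeGrammar T).Derives (Bs.map .nonterminal) (w.map .terminal) := by
  induction Bs generalizing w with
  | nil => rw [(h.eq_of_map_terminal (u := [])).trans List.map_nil]; rfl
  | cons B Bs ih =>
    obtain ⟨w₁, w₂, rfl, h₁, h₂⟩ :=
      Derives.append_cases_map_terminal (g := ⟨N, S, R⟩) (p := [.nonterminal B]) h
    rw [List.length_append] at hw
    simpa using (hn B w₁ (by omega) h₁).append (ih (by omega) h₂)

def IsTwoGNFRule (R : Finset (ContextFreeRule T N)) (r' : ContextFreeRule T N) : Prop :=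
  (r' ∈ R ∧ (r'.output = [] ∨ ∃ a : T, r'.output = [Symbol.terminal a])) ∨
  (∃ (A A₁ : N) (a b : T) (rest Bs : List N),
    (⟨A, Symbol.terminal a :: Symbol.nonterminal A₁ :: rest.map Symbol.nonterminal⟩ :
        ContextFreeRule T N) ∈ R ∧
    (⟨A₁, Symbol.terminal b :: Bs.map Symbol.nonterminal⟩ : ContextFreeRule T N) ∈ R ∧
    r' = ⟨A, Symbol.terminal a :: Symbol.terminal b :: (Bs ++ rest).map Symbol.nonterminal⟩)

namespace IsTwoGNFRule

variable {S : N} {R R' : Finset (ContextFreeRule T N)}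

lemma derives {r' : ContextFreeRule T N} (h : IsTwoGNFRule R r') :
    (⟨N, S, R⟩ : ContextFreeGrammar T).Derives [.nonterminal r'.input] r'.output := by
  rcases h with ⟨hr, -⟩ | ⟨A, A₁, a, b, rest, Bs, hr, hr₁, rfl⟩
  · exact (produces_input_output hr).single
  · have expand_A₁ := ((produces_input_output (g := ⟨N, S, R⟩) hr₁).single.append_left
      [.terminal a]).append_right (rest.map .nonterminal)
    have expand_A := produces_input_output (g := ⟨N, S, R⟩) hr
    exact expand_A.trans_derives (by simpa using expand_A₁)

lemma derives_nonterminal_of_inGNF (hGNF : (⟨N, S, R⟩ : ContextFreeGrammar T).InGNF)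
    (hR' : ∀ r', r' ∈ R' ↔ IsTwoGNFRule R r') {A : N} {w : List T}
    (h : (⟨N, S, R⟩ : ContextFreeGrammar T).Derives [.nonterminal A] (w.map .terminal)) :
    (⟨N, S, R'⟩ : ContextFreeGrammar T).Derives [.nonterminal A] (w.map .terminal) := by
  induction hn : w.length using Nat.strong_induction_on generalizing A w with
  | _ n ih =>
  obtain ⟨r, hr, rfl, hd⟩ := h.exists_rule_of_nonterminal
  have of_terminal_output (u : List T) (hu : r.output = u.map .terminal) (hr' : r ∈ R') :
      (⟨N, S, R'⟩ : ContextFreeGrammar T).Derives [.nonterminal r.input] (w.map .terminal) := by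
    rw [hu] at hd
    rw [hd.eq_of_map_terminal, ← hu]
    exact (produces_input_output hr').single
  rcases hGNF.2 r hr with ⟨-, hout⟩ | ⟨a, _ | ⟨A₁, rest⟩, hout⟩
  · exact of_terminal_output [] hout ((hR' r).2 (.inl ⟨hr, .inl hout⟩))
  · exact of_terminal_output [a] hout ((hR' r).2 (.inl ⟨hr, .inr ⟨a, hout⟩⟩))
  rw [hout] at hd
  obtain ⟨w', rfl, hd'⟩ := hd.exists_of_terminal_cons
  obtain ⟨w₁, w₂, rfl, h₁, h₂⟩ :=
    Derives.append_cases_map_terminal (g := ⟨N, S, R⟩) (p := [.nonterminal A₁]) hd'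
  obtain ⟨r₁, hr₁, rfl, hd₁⟩ := h₁.exists_rule_of_nonterminal
  rcases hGNF.2 r₁ hr₁ with ⟨hS, -⟩ | ⟨b, Cs, hout₁⟩
  · exact absurd (by simp [hout, hS]) (hGNF.1 r hr)
  rw [hout₁] at hd₁
  obtain ⟨w₁', rfl, hd₁'⟩ := hd₁.exists_of_terminal_cons
  have hr' : (⟨r.input, .terminal a :: .terminal b :: (Cs ++ rest).map .nonterminal⟩ :
      ContextFreeRule T N) ∈ R' :=
    (hR' _).2 (.inr ⟨r.input, r₁.input, a, b, rest, Cs,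
      by rw [← List.map_cons, ← hout]; exact hr, by rw [← hout₁]; exact hr₁, rfl⟩)
  have hrest : (⟨N, S, R⟩ : ContextFreeGrammar T).Derives ((Cs ++ rest).map .nonterminal)
      ((w₁' ++ w₂).map .terminal) := by
    simpa using hd₁'.append h₂
  have hrest' := derives_map_nonterminal_of_forall (n := (w₁' ++ w₂).length)
    (fun B v hv hBv ↦ ih v.length (by simp at hn hv; omega) hBv rfl) le_rfl hrest
  have expand_A := produces_input_output (g := ⟨N, S, R'⟩) hr'
  exact expand_A.trans_derives (by simpa using hrest'.append_left [.terminal a, .terminal b])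

lemma inTwoGNF (hGNF : (⟨N, S, R⟩ : ContextFreeGrammar T).InGNF)
    (hR' : ∀ r', r' ∈ R' ↔ IsTwoGNFRule R r') :
    (⟨N, S, R'⟩ : ContextFreeGrammar T).InTwoGNF := by
  constructor
  · intro r' hr'
    rcases (hR' r').1 hr' with ⟨hr, -⟩ | ⟨A, A₁, a, b, rest, Bs, hr, hr₁, rfl⟩
    · exact hGNF.1 r' hr
    · have := hGNF.1 _ hr
      have := hGNF.1 _ hr₁
      simp_all
  · intro r' hr'
    rcases (hR' r').1 hr' with ⟨hr, hε | ⟨a, ha⟩⟩ | ⟨A, A₁, a, b, rest, Bs, -, -, rfl⟩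
    · rcases hGNF.2 r' hr with hS | ⟨a, Bs, hout⟩
      · exact .inl hS
      · simp [hε] at hout
    · exact .inr (.inl ⟨a, ha⟩)
    · exact .inr (.inr ⟨a, b, Bs ++ rest, rfl⟩)

end IsTwoGNFRule

/-- Let `G = ⟨N, S, R⟩` be a grammar in Greibach normal form, and let `G' = ⟨N, S, R'⟩` be
obtained from `G` by replacing every rule `A → a A₁ A₂ ⋯ A_m` (with `m ≥ 1`) by all rules
`A → a b B₁ ⋯ B_ℓ A₂ ⋯ A_m` such that `A₁ → b B₁ ⋯ B_ℓ` is a rule of `G` (discarding the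
original rule), while keeping all rules of the forms `S → ε` and `A → a` unchanged.
Then `L(G') = L(G)` and `G'` is in 2-Greibach normal form. -/
theorem gnf_to_twoGNF {T N : Type} (S : N) (R R' : Finset (ContextFreeRule T N))
    (hGNF : (⟨N, S, R⟩ : ContextFreeGrammar T).InGNF)
    (hR' : ∀ r' : ContextFreeRule T N,
      r' ∈ R' ↔
        (r' ∈ R ∧ (r'.output = [] ∨ ∃ a : T, r'.output = [Symbol.terminal a])) ∨
        (∃ (A A₁ : N) (a b : T) (rest Bs : List N),
          (⟨A, Symbol.terminal a :: Symbol.nonterminal A₁ :: rest.map Symbol.nonterminal⟩ :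
              ContextFreeRule T N) ∈ R ∧
          (⟨A₁, Symbol.terminal b :: Bs.map Symbol.nonterminal⟩ :
              ContextFreeRule T N) ∈ R ∧
          r' = ⟨A, Symbol.terminal a :: Symbol.terminal b ::
              (Bs ++ rest).map Symbol.nonterminal⟩)) :
    (⟨N, S, R'⟩ : ContextFreeGrammar T).language = (⟨N, S, R⟩ : ContextFreeGrammar T).language ∧
      (⟨N, S, R'⟩ : ContextFreeGrammar T).InTwoGNF := by
  refine ⟨?_, IsTwoGNFRule.inTwoGNF hGNF hR'⟩
  ext w
  exact ⟨fun h ↦ h.of_forall_rule_derives fun r hr ↦ IsTwoGNFRule.derives ((hR' r).1 hr),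
    IsTwoGNFRule.derives_nonterminal_of_inGNF hGNF hR'⟩
end

section
/- Under the time-varying weighted restricted PDA semantics, the forward weights α defined from the inner weights γ are correct: for all t ≥ 0 and all r ∈ Q, y ∈ Γ, α[t][r,y] equals the total weight Σ ψ(π) over all runs π of length t starting from the initial configuration (q₀, ⊥) and ending in state r with a nonempty stack whose top symbol is y. Consequently, whenever the total Σ_{r',y'} α[t][r',y'] is positive, the normalized quantity α[t][r,y]/Σ_{r',y'} α[t][r',y'] equals the fraction of total run weight carried by runs of length t ending in state r with top stack symbol y (the marginal distribution over states and top stack symbols). -/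
/-- An operation of a restricted (restricted-form) PDA with states `Q` and stack alphabet `Γ`:
`push q x r y` has left-hand side `q, x` and pushes `y` on top of `x` while moving to state
`r`; `repl q x r y` replaces the top symbol `x` by `y`; `pop q x r` pops the top symbol `x`. -/
inductive Op (Q Γ : Type) where
  | push (q : Q) (x : Γ) (r : Q) (y : Γ)
  | repl (q : Q) (x : Γ) (r : Q) (y : Γ)
  | pop (q : Q) (x : Γ) (r : Q)
  deriving DecidableEq

/-- `OpStep c o c'` : the operation `o` is applicable to configuration `c` (its left-hand
side state is the current state and its left-hand side stack symbol is the current top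
symbol, the stack being nonempty) and produces configuration `c'`.  Stacks are lists whose
head is the top of the stack. -/
inductive OpStep {Q Γ : Type} : Q × List Γ → Op Q Γ → Q × List Γ → Prop
  | push (q : Q) (x : Γ) (r : Q) (y : Γ) (β : List Γ) :
      OpStep (q, x :: β) (Op.push q x r y) (r, y :: x :: β)
  | repl (q : Q) (x : Γ) (r : Q) (y : Γ) (β : List Γ) :
      OpStep (q, x :: β) (Op.repl q x r y) (r, y :: β)
  | pop (q : Q) (x : Γ) (r : Q) (β : List Γ) :
      OpStep (q, x :: β) (Op.pop q x r) (r, β)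

/-- `RunFrom c π c'` : the sequence of operations `π`, applied successively starting from
configuration `c`, is applicable at each step and ends in configuration `c'`. -/
inductive RunFrom {Q Γ : Type} : Q × List Γ → List (Op Q Γ) → Q × List Γ → Prop
  | nil (c : Q × List Γ) : RunFrom c [] c
  | cons {c c' c'' : Q × List Γ} {o : Op Q Γ} {π : List (Op Q Γ)} :
      OpStep c o c' → RunFrom c' π c'' → RunFrom c (o :: π) c''

/-- Given time-varying operation weights `Δ`, the weight of a run `π` whose first operation
happens at timestep `k` is the product of the weights of its operations at their respective
timesteps. -/
def runWeight {Q Γ : Type} (Δ : ℕ → Op Q Γ → ℝ) : ℕ → List (Op Q Γ) → ℝ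
  | _, [] => 1
  | k, o :: π => Δ k o * runWeight Δ (k + 1) π

/-- Table of the inner weights `γ` of Lang's algorithm, with indices shifted by one:
`gamTable q₀ bot Δ t t' I q x r y` equals (for `t' ≤ t` and `I ≤ t'`) the inner weight
`γ[i → t'][q,x → r,y]` where `i = I - 1` (so `I = 0` represents `i = -1`).  It is defined by
the recurrence
`γ[-1→0][q,x→r,y] = 1` if `(q,x,r,y) = (q₀,⊥,q₀,⊥)` and `0` otherwise, and for `t ≥ 1`,
`γ[i→t] = 1{i = t-1}·Δ_t[q,x→r,xy] + Σ_{s,z} γ[i→t-1][q,x→s,z]·Δ_t[s,z→r,y]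
        + Σ_{k=i+1}^{t-2} Σ_u γ[i→k][q,x→u,y]·γ'[k][u,y→t,r]`,
where `γ'[k][u,y→t,r] = Σ_{s,z} γ[k→t-1][u,y→s,z]·Δ_t[s,z→r,ε]`. -/
def gamTable {Q Γ : Type} [Fintype Q] [Fintype Γ] [DecidableEq Q] [DecidableEq Γ]
    (q₀ : Q) (bot : Γ) (Δ : ℕ → Op Q Γ → ℝ) : ℕ → ℕ → ℕ → Q → Γ → Q → Γ → ℝ
  | 0 => fun t' I q x r y =>
      if t' = 0 ∧ I = 0 ∧ q = q₀ ∧ x = bot ∧ r = q₀ ∧ y = bot then 1 else 0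
  | t + 1 => fun t' I q x r y =>
      if t' = t + 1 then
        (if I = t + 1 then Δ (t + 1) (Op.push q x r y) else 0)
        + (∑ s : Q, ∑ z : Γ,
            gamTable q₀ bot Δ t t I q x s z * Δ (t + 1) (Op.repl s z r y))
        + ∑ k ∈ Finset.Ico I t, ∑ u : Q,
            gamTable q₀ bot Δ t k I q x u y *
              (∑ s : Q, ∑ z : Γ,
                gamTable q₀ bot Δ t t (k + 1) u y s z * Δ (t + 1) (Op.pop s z r))
      else gamTable q₀ bot Δ t t' I q x r y

/-- The inner weights `γ` with shifted lower index: `gam q₀ bot Δ t I q x r y` is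
`γ[(I-1) → t][q,x → r,y]` (so `I = 0` represents the lower index `i = -1`). -/
def gam {Q Γ : Type} [Fintype Q] [Fintype Γ] [DecidableEq Q] [DecidableEq Γ]
    (q₀ : Q) (bot : Γ) (Δ : ℕ → Op Q Γ → ℝ) (t I : ℕ) : Q → Γ → Q → Γ → ℝ :=
  gamTable q₀ bot Δ t t I

/-- Table of the forward weights `α`, with indices shifted by one: `alTable q₀ bot Δ t J r y`
equals (for `J ≤ t`) the forward weight `α[J-1][r,y]` (so `J = 0` represents `α[-1]`).
It is defined by `α[-1][r,y] = 1` if `(r,y) = (q₀,⊥)` and `0` otherwise, and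
`α[t][r,y] = Σ_{i=-1}^{t-1} Σ_{q,x} α[i][q,x]·γ[i→t][q,x→r,y]` for `t ≥ 0`. -/
def alTable {Q Γ : Type} [Fintype Q] [Fintype Γ] [DecidableEq Q] [DecidableEq Γ]
    (q₀ : Q) (bot : Γ) (Δ : ℕ → Op Q Γ → ℝ) : ℕ → ℕ → Q → Γ → ℝ
  | 0 => fun J r y => if J = 0 ∧ r = q₀ ∧ y = bot then 1 else 0
  | t + 1 => fun J r y =>
      if J = t + 1 then
        ∑ Jp ∈ Finset.range (t + 1), ∑ q : Q, ∑ x : Γ,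
          alTable q₀ bot Δ t Jp q x * gam q₀ bot Δ t Jp q x r y
      else alTable q₀ bot Δ t J r y

/-- The forward weights `α` with shifted index: `alph q₀ bot Δ J r y` is `α[J-1][r,y]`
(so `J = 0` represents `α[-1]` and `J = t+1` represents `α[t]`). -/
def alph {Q Γ : Type} [Fintype Q] [Fintype Γ] [DecidableEq Q] [DecidableEq Γ]
    (q₀ : Q) (bot : Γ) (Δ : ℕ → Op Q Γ → ℝ) (J : ℕ) : Q → Γ → ℝ :=
  alTable q₀ bot Δ J J


/-!
Read `γ[i → t][q,x → r,y]`, for `i ≥ 0`, as the weight of the runs over the timesteps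
`i + 1, …, t` that push onto `x` at timestep `i + 1` and never pop the pushed symbol afterwards,
i.e. continue with a balanced run from `(u, [w])` to `(r, [y])`; and `γ[-1 → t]` as the weight of
the balanced runs from the initial configuration. The recurrence for `γ` is then the last-step
decomposition of balanced runs: the last operation is a replacement, or a pop, and a pop splits
the run at the matching push into two balanced runs. The recurrence for `α` is the decomposition
of a run ending with top symbol `y` at its last unmatched push: what precedes it is a run to the
configuration before that push, what follows it is a balanced run. Both decompositions are
unique because a push followed by a balanced run is never popped. The normalized statement
follows because the runs ending with a nonempty stack are partitioned by their final state and
top symbol.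
-/

section Runs

variable {Q Γ : Type}

theorem OpStep.deterministic {c c₁ c₂ : Q × List Γ} {o : Op Q Γ}
    (h₁ : OpStep c o c₁) (h₂ : OpStep c o c₂) : c₁ = c₂ := by
  cases h₁ <;> cases h₂ <;> rfl

theorem OpStep.append_stack {c c' : Q × List Γ} {o : Op Q Γ} (h : OpStep c o c')
    (β : List Γ) : OpStep (c.1, c.2 ++ β) o (c'.1, c'.2 ++ β) := by
  cases h
  · exact .push ..
  · exact .repl ..
  · exact .pop ..

namespace RunFrom

theorem deterministic {c c₁ c₂ : Q × List Γ} {π : List (Op Q Γ)}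
    (h₁ : RunFrom c π c₁) (h₂ : RunFrom c π c₂) : c₁ = c₂ := by
  induction h₁ with
  | nil => cases h₂; rfl
  | cons hs _ ih =>
    cases h₂ with
    | cons hs' hr' => exact ih (hs.deterministic hs' ▸ hr')

theorem append_stack {c c' : Q × List Γ} {π : List (Op Q Γ)} (h : RunFrom c π c')
    (β : List Γ) : RunFrom (c.1, c.2 ++ β) π (c'.1, c'.2 ++ β) := by
  induction h with
  | nil => exact .nil _
  | cons hs _ ih => exact .cons (hs.append_stack β) ih

theorem append {c c₁ c₂ : Q × List Γ} {π₁ π₂ : List (Op Q Γ)}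
    (h₁ : RunFrom c π₁ c₁) (h₂ : RunFrom c₁ π₂ c₂) : RunFrom c (π₁ ++ π₂) c₂ := by
  induction h₁ with
  | nil => exact h₂
  | cons hs _ ih => exact .cons hs (ih h₂)

theorem singleton {c c' : Q × List Γ} {o : Op Q Γ} (h : OpStep c o c') : RunFrom c [o] c' :=
  .cons h (.nil _)

end RunFrom

theorem runFrom_nil_iff {c c' : Q × List Γ} : RunFrom c [] c' ↔ c = c' :=
  ⟨fun h => by cases h; rfl, fun h => h ▸ .nil c⟩

theorem runFrom_append_iff {c c₂ : Q × List Γ} {π₁ π₂ : List (Op Q Γ)} :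
    RunFrom c (π₁ ++ π₂) c₂ ↔ ∃ c₁, RunFrom c π₁ c₁ ∧ RunFrom c₁ π₂ c₂ := by
  refine ⟨fun h => ?_, fun ⟨_, h₁, h₂⟩ => h₁.append h₂⟩
  induction π₁ generalizing c with
  | nil => exact ⟨c, .nil c, h⟩
  | cons o π₁ ih =>
    cases h with
    | cons hs hr =>
      obtain ⟨c₁, h₁, h₂⟩ := ih hr
      exact ⟨c₁, .cons hs h₁, h₂⟩

theorem runFrom_concat_iff {c c' : Q × List Γ} {π : List (Op Q Γ)} {o : Op Q Γ} :
    RunFrom c (π ++ [o]) c' ↔ ∃ c₁, RunFrom c π c₁ ∧ OpStep c₁ o c' := by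
  simp only [runFrom_append_iff]
  refine exists_congr fun c₁ => and_congr_right fun _ => ⟨fun h => ?_, RunFrom.singleton⟩
  cases h with
  | cons hs hr => exact (runFrom_nil_iff.mp hr) ▸ hs

theorem runFrom_append_push_iff {c c' : Q × List Γ} {π₁ π₂ : List (Op Q Γ)}
    {q u r : Q} {x w y : Γ} (h₂ : RunFrom (u, [w]) π₂ (r, [y])) :
    RunFrom c (π₁ ++ Op.push q x u w :: π₂) c' ↔
      ∃ τ, RunFrom c π₁ (q, x :: τ) ∧ c' = (r, y :: x :: τ) := by
  constructor
  · intro h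
    obtain ⟨c₁, h₁, h'⟩ := runFrom_append_iff.mp h
    cases h' with
    | cons hs hr =>
      cases hs with
      | push _ _ _ _ τ => exact ⟨τ, h₁, hr.deterministic (h₂.append_stack (x :: τ))⟩
  · rintro ⟨τ, h₁, rfl⟩
    exact h₁.append (.cons (.push ..) (h₂.append_stack (x :: τ)))

theorem RunFrom.exists_last_unmatched_push {q r : Q} {σ β : List Γ} {y : Γ}
    {π : List (Op Q Γ)} (h : RunFrom (q, σ) π (r, y :: β)) (hσ : σ.length ≤ β.length) :
    ∃ p₁ q₁ x τ u w p₂, β = x :: τ ∧ π = p₁ ++ Op.push q₁ x u w :: p₂ ∧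
      RunFrom (q, σ) p₁ (q₁, x :: τ) ∧ RunFrom (u, [w]) p₂ (r, [y]) := by
  rcases List.eq_nil_or_concat' π with rfl | ⟨p, o, hπ⟩
  · cases runFrom_nil_iff.mp h
    simp at hσ
  rw [hπ] at h ⊢
  obtain ⟨c₁, hp, ho⟩ := runFrom_concat_iff.mp h
  cases ho with
  | push q₁ x _ _ τ => exact ⟨p, q₁, x, τ, r, y, [], rfl, rfl, hp, .nil _⟩
  | repl s z _ _ _ =>
    obtain ⟨p₁, q₁, x, τ, u, w, p₂, rfl, rfl, h₁, h₂⟩ := hp.exists_last_unmatched_push hσ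
    exact ⟨p₁, q₁, x, τ, u, w, p₂ ++ [Op.repl s z r y], rfl, by simp, h₁,
      h₂.append (.singleton (.repl ..))⟩
  | pop s z _ _ =>
    -- the popped symbol `z` was pushed onto `y` at the last unmatched push of the prefix;
    -- the last unmatched push of the whole run is the one below it
    obtain ⟨p₁, q₁, _, _, u, w, p₂, he, rfl, h₁, h₂⟩ :=
      hp.exists_last_unmatched_push (β := y :: β) (by simp; omega)
    obtain ⟨rfl, rfl⟩ := List.cons.inj he
    obtain ⟨p₁', q₂, x, τ, u₂, w₂, p₂', rfl, rfl, h₁', h₂'⟩ :=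
      h₁.exists_last_unmatched_push hσ
    refine ⟨p₁', q₂, x, τ, u₂, w₂, p₂' ++ Op.push q₁ y u w :: p₂ ++ [Op.pop s z r],
      rfl, by simp, h₁', ?_⟩
    exact ((runFrom_append_push_iff h₂).mpr ⟨[], h₂', rfl⟩).append (.singleton (.pop ..))
termination_by π.length
decreasing_by all_goals simp [hπ]

theorem last_unmatched_push_unique {p₁ p₂ p₁' p₂' : List (Op Q Γ)} {q₁ u r q₁' u' r' : Q}
    {x w y x' w' y' : Γ}
    (h : p₁ ++ Op.push q₁ x u w :: p₂ = p₁' ++ Op.push q₁' x' u' w' :: p₂')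
    (h₂ : RunFrom (u, [w]) p₂ (r, [y])) (h₂' : RunFrom (u', [w']) p₂' (r', [y'])) :
    p₁ = p₁' ∧ Op.push q₁ x u w = Op.push q₁' x' u' w' ∧ p₂ = p₂' := by
  -- a push followed by a balanced run is never popped, so it cannot occur inside a balanced run
  have key {m p : List (Op Q Γ)} {u r u' r' q : Q} {w y w' y' x : Γ}
      (h : RunFrom (u, [w]) (m ++ Op.push q x u' w' :: p) (r, [y]))
      (hp : RunFrom (u', [w']) p (r', [y'])) : False := by
    obtain ⟨τ, -, he⟩ := (runFrom_append_push_iff hp).mp h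
    simp at he
  rcases List.append_eq_append_iff.mp h with ⟨_ | ⟨o, m⟩, rfl, he⟩ | ⟨_ | ⟨o, m⟩, rfl, he⟩
  · simp_all
  · exact (key ((List.cons.inj he).2 ▸ h₂) h₂').elim
  · simp_all
  · exact (key ((List.cons.inj he).2 ▸ h₂') h₂).elim

theorem runWeight_append (Δ : ℕ → Op Q Γ → ℝ) (k : ℕ) (π₁ π₂ : List (Op Q Γ)) :
    runWeight Δ k (π₁ ++ π₂) = runWeight Δ k π₁ * runWeight Δ (k + π₁.length) π₂ := by
  induction π₁ generalizing k with
  | nil => simp [runWeight]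
  | cons o π₁ ih => simp [runWeight, ih, mul_assoc, Nat.add_right_comm, Nat.add_assoc]

instance [Finite Q] [Finite Γ] : Finite (Op Q Γ) :=
  Finite.of_surjective
    (fun p : (Q × Γ × Q × Γ) ⊕ (Q × Γ × Q × Γ) ⊕ (Q × Γ × Q) =>
      p.elim (fun ⟨q, x, r, y⟩ => .push q x r y)
        (Sum.elim (fun ⟨q, x, r, y⟩ => .repl q x r y) fun ⟨q, x, r⟩ => .pop q x r))
    (by rintro (⟨q, x, r, y⟩ | ⟨q, x, r, y⟩ | ⟨q, x, r⟩)
        exacts [⟨.inl (q, x, r, y), rfl⟩, ⟨.inr (.inl (q, x, r, y)), rfl⟩,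
          ⟨.inr (.inr (q, x, r)), rfl⟩])

end Runs

theorem sum_sum_mul_assoc {α β γ δ R : Type} [NonUnitalSemiring R] (s : Finset α)
    (t : Finset β) (u : Finset γ) (v : Finset δ) (P : α → β → R) (B : α → β → γ → δ → R)
    (G : γ → δ → R) :
    ∑ a ∈ s, ∑ b ∈ t, P a b * ∑ c ∈ u, ∑ d ∈ v, B a b c d * G c d =
      ∑ c ∈ u, ∑ d ∈ v, (∑ a ∈ s, ∑ b ∈ t, P a b * B a b c d) * G c d := by
  simp only [Finset.mul_sum, Finset.sum_mul, mul_assoc]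
  simp_rw [Finset.sum_comm (s := t), Finset.sum_comm (s := s)]

section Weights

open Finset

variable {Q Γ : Type}

section Finite

variable [Finite Q] [Finite Γ]

noncomputable def topRuns (n : ℕ) (c : Q × List Γ) (T : Set (List Γ)) (r : Q) (y : Γ) :
    Finset (List (Op Q Γ)) :=
  Set.Finite.toFinset (s := {π | π.length = n ∧ ∃ β ∈ T, RunFrom c π (r, y :: β)})
    ((List.finite_length_eq _ n).subset fun _ h => h.1)

@[simp]
theorem mem_topRuns {n : ℕ} {c : Q × List Γ} {T : Set (List Γ)} {r : Q} {y : Γ}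
    {π : List (Op Q Γ)} :
    π ∈ topRuns n c T r y ↔ π.length = n ∧ ∃ β ∈ T, RunFrom c π (r, y :: β) :=
  Set.Finite.mem_toFinset _

variable (Δ : ℕ → Op Q Γ → ℝ)

/-- Total weight of the runs occupying the timesteps `i + 1, …, t`. -/
noncomputable def topWeight (i t : ℕ) (c : Q × List Γ) (T : Set (List Γ)) (r : Q) (y : Γ) :
    ℝ :=
  ∑ π ∈ topRuns (t - i) c T r y, runWeight Δ (i + 1) π

noncomputable def balWeight (i t : ℕ) (u : Q) (w : Γ) (r : Q) (y : Γ) : ℝ :=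
  topWeight Δ i t (u, [w]) {[]} r y

theorem topWeight_empty (i t : ℕ) (c : Q × List Γ) (r : Q) (y : Γ) :
    topWeight Δ i t c ∅ r y = 0 :=
  sum_eq_zero fun π hπ => by simp at hπ

theorem topWeight_union {T₁ T₂ : Set (List Γ)} (h : Disjoint T₁ T₂) (i t : ℕ)
    (c : Q × List Γ) (r : Q) (y : Γ) :
    topWeight Δ i t c (T₁ ∪ T₂) r y = topWeight Δ i t c T₁ r y + topWeight Δ i t c T₂ r y := by
  classical
  rw [topWeight, topWeight, topWeight, ← sum_union]
  · congr 1
    ext π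
    simp only [mem_topRuns, Set.mem_union, mem_union, or_and_right, exists_or, and_or_left]
  · refine disjoint_left.mpr fun π h₁ h₂ => ?_
    obtain ⟨-, β₁, hβ₁, hr₁⟩ := mem_topRuns.mp h₁
    obtain ⟨-, β₂, hβ₂, hr₂⟩ := mem_topRuns.mp h₂
    cases hr₁.deterministic hr₂
    exact Set.disjoint_left.mp h hβ₁ hβ₂

theorem topWeight_preimage_cons_singleton [DecidableEq Γ] (i t : ℕ) (c : Q × List Γ) (r : Q)
    (x y : Γ) :
    topWeight Δ i t c ((x :: ·) ⁻¹' {[y]}) r x =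
      if x = y then topWeight Δ i t c {[]} r x else 0 := by
  split_ifs with hxy
  · subst hxy
    congr 1
    ext
    simp
  · convert topWeight_empty Δ i t c r x
    ext
    simp [hxy]

theorem balWeight_self [DecidableEq Q] [DecidableEq Γ] (i : ℕ) (u : Q) (w : Γ) (r : Q)
    (y : Γ) : balWeight Δ i i u w r y = if u = r ∧ w = y then 1 else 0 := by
  have hruns : topRuns 0 (u, [w]) {[]} r y = if u = r ∧ w = y then {[]} else ∅ := by
    ext π
    simp only [mem_topRuns, List.length_eq_zero_iff, Set.mem_singleton_iff, exists_eq_left]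
    split_ifs with h
    · obtain ⟨rfl, rfl⟩ := h
      simpa using fun h => h ▸ RunFrom.nil _
    · simp only [notMem_empty, iff_false, not_and]
      rintro rfl hr
      cases runFrom_nil_iff.mp hr
      exact h ⟨rfl, rfl⟩
  rw [balWeight, topWeight, Nat.sub_self, hruns]
  split_ifs <;> simp [runWeight]

theorem finsum_runs_eq_topWeight (c : Q × List Γ) (n : ℕ) (r : Q) (y : Γ) :
    ∑ᶠ π ∈ {π : List (Op Q Γ) | π.length = n ∧ ∃ β : List Γ, RunFrom c π (r, y :: β)},
      runWeight Δ 1 π = topWeight Δ 0 n c Set.univ r y := by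
  have hset : {π : List (Op Q Γ) | π.length = n ∧ ∃ β : List Γ, RunFrom c π (r, y :: β)} =
      topRuns n c Set.univ r y := by
    ext; simp
  rw [hset, finsum_mem_coe_finset, topWeight, Nat.sub_zero]

end Finite

variable [Fintype Q] [Fintype Γ] (Δ : ℕ → Op Q Γ → ℝ)

/-- The semantic counterpart of the inner weight `γ[k → t][q,x → r,y]` for `k ≥ 0`. -/
noncomputable def pushWeight (k t : ℕ) (q : Q) (x : Γ) (r : Q) (y : Γ) : ℝ :=
  ∑ u, ∑ w, Δ (k + 1) (Op.push q x u w) * balWeight Δ (k + 1) t u w r y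

theorem topWeight_eq_sum_pushWeight {q : Q} {σ : List Γ} {T : Set (List Γ)}
    (hT : ∀ β ∈ T, σ.length ≤ β.length) (i t : ℕ) (r : Q) (y : Γ) :
    topWeight Δ i t (q, σ) T r y = ∑ k ∈ Ico i t, ∑ q₁, ∑ x,
      topWeight Δ i k (q, σ) ((x :: ·) ⁻¹' T) q₁ x * pushWeight Δ k t q₁ x r y := by
  let R₁ (a : ℕ × Q × Γ × Q × Γ) :=
    topRuns (a.1 - i) (q, σ) ((a.2.2.1 :: ·) ⁻¹' T) a.2.1 a.2.2.1
  let R₂ (a : ℕ × Q × Γ × Q × Γ) := topRuns (t - (a.1 + 1)) (a.2.2.2.1, [a.2.2.2.2]) {[]} r y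
  let S := (Ico i t ×ˢ univ).sigma fun a => R₁ a ×ˢ R₂ a
  have hmem {k q₁ x u w p₁ p₂} : (⟨(k, q₁, x, u, w), (p₁, p₂)⟩ ∈ S) ↔
      (i ≤ k ∧ k < t) ∧ (p₁.length = k - i ∧ ∃ τ, x :: τ ∈ T ∧ RunFrom (q, σ) p₁ (q₁, x :: τ)) ∧
        p₂.length = t - (k + 1) ∧ RunFrom (u, [w]) p₂ (r, [y]) := by
    simp [S, R₁, R₂]
  have hsum : ∑ k ∈ Ico i t, ∑ q₁, ∑ x,
      topWeight Δ i k (q, σ) ((x :: ·) ⁻¹' T) q₁ x * pushWeight Δ k t q₁ x r y =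
      ∑ a ∈ S, runWeight Δ (i + 1) a.2.1 *
        (Δ (a.1.1 + 1) (Op.push a.1.2.1 a.1.2.2.1 a.1.2.2.2.1 a.1.2.2.2.2) *
          runWeight Δ (a.1.1 + 1 + 1) a.2.2) := by
    simp only [S, sum_sigma, sum_product_right (s := R₁ _), sum_product (s := Ico i t),
      Fintype.sum_prod_type, topWeight, pushWeight, balWeight, mul_sum, sum_mul]
    rfl
  rw [hsum, topWeight]
  refine (sum_nbij (fun a => a.2.1 ++ Op.push a.1.2.1 a.1.2.2.1 a.1.2.2.2.1 a.1.2.2.2.2 :: a.2.2)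
    ?_ ?_ ?_ ?_).symm
  · rintro ⟨⟨k, q₁, x, u, w⟩, p₁, p₂⟩ ha
    obtain ⟨⟨hik, hkt⟩, ⟨hl₁, τ, hτ, h₁⟩, hl₂, h₂⟩ := hmem.mp ha
    exact mem_topRuns.mpr
      ⟨by simp; omega, x :: τ, hτ, (runFrom_append_push_iff h₂).mpr ⟨τ, h₁, rfl⟩⟩
  · rintro ⟨⟨k, q₁, x, u, w⟩, p₁, p₂⟩ ha ⟨⟨k', q₁', x', u', w'⟩, p₁', p₂'⟩ ha' he
    obtain ⟨⟨hik, -⟩, ⟨hl, -⟩, -, h₂⟩ := hmem.mp ha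
    obtain ⟨⟨hik', -⟩, ⟨hl', -⟩, -, h₂'⟩ := hmem.mp ha'
    dsimp only at he
    obtain ⟨rfl, hop, rfl⟩ := last_unmatched_push_unique he h₂ h₂'
    obtain ⟨rfl, rfl, rfl, rfl⟩ := Op.push.inj hop
    obtain rfl : k = k' := by omega
    rfl
  · intro π hπ
    obtain ⟨hl, β, hβ, h⟩ := mem_topRuns.mp hπ
    obtain ⟨p₁, q₁, x, τ, u, w, p₂, rfl, rfl, h₁, h₂⟩ := h.exists_last_unmatched_push (hT β hβ)
    simp only [List.length_append, List.length_cons] at hl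
    exact ⟨⟨⟨i + p₁.length, q₁, x, u, w⟩, p₁, p₂⟩,
      hmem.mpr ⟨⟨by omega, by omega⟩, ⟨by omega, τ, hβ, h₁⟩, by omega, h₂⟩, rfl⟩
  · rintro ⟨⟨k, q₁, x, u, w⟩, p₁, p₂⟩ ha
    obtain ⟨⟨hik, -⟩, ⟨hl, -⟩, -⟩ := hmem.mp ha
    simp only [runWeight_append, runWeight, hl, show i + 1 + (k - i) = k + 1 by omega]

theorem balWeight_succ_eq_repl_add_pop {i t : ℕ} (hit : i ≤ t) (u : Q) (w : Γ) (r : Q)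
    (y : Γ) :
    balWeight Δ i (t + 1) u w r y =
      ∑ s, ∑ z, balWeight Δ i t u w s z * Δ (t + 1) (Op.repl s z r y) +
      ∑ s, ∑ z, topWeight Δ i t (u, [w]) {[y]} s z * Δ (t + 1) (Op.pop s z r) := by
  let R (a : (Q × Γ) ⊕ (Q × Γ)) : Finset (List (Op Q Γ)) :=
    a.elim (fun sz => topRuns (t - i) (u, [w]) {[]} sz.1 sz.2)
      (fun sz => topRuns (t - i) (u, [w]) {[y]} sz.1 sz.2)
  let last (a : (Q × Γ) ⊕ (Q × Γ)) : Op Q Γ :=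
    a.elim (fun sz => Op.repl sz.1 sz.2 r y) (fun sz => Op.pop sz.1 sz.2 r)
  have hsum : ∑ s, ∑ z, balWeight Δ i t u w s z * Δ (t + 1) (Op.repl s z r y) +
      ∑ s, ∑ z, topWeight Δ i t (u, [w]) {[y]} s z * Δ (t + 1) (Op.pop s z r) =
      ∑ a ∈ univ.sigma R, runWeight Δ (i + 1) a.2 * Δ (t + 1) (last a.1) := by
    simp only [sum_sigma, Fintype.sum_sum_type, Fintype.sum_prod_type, balWeight, topWeight,
      sum_mul]
    rfl
  rw [hsum, balWeight, topWeight]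
  refine (sum_nbij (fun a => a.2 ++ [last a.1]) ?_ ?_ ?_ ?_).symm
  · rintro ⟨⟨s, z⟩ | ⟨s, z⟩, p⟩ ha <;>
    · simp only [R, mem_sigma, mem_univ, true_and, Sum.elim_inl, Sum.elim_inr, mem_topRuns,
        Set.mem_singleton_iff, exists_eq_left] at ha
      exact mem_topRuns.mpr ⟨by simp; omega, [], rfl, ha.2.append (.singleton (by constructor))⟩
  · rintro ⟨a, p⟩ - ⟨a', p'⟩ - he
    obtain ⟨rfl, ho⟩ := List.append_inj' he rfl
    rcases a with ⟨s, z⟩ | ⟨s, z⟩ <;> rcases a' with ⟨s', z'⟩ | ⟨s', z'⟩ <;> simp_all [last]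
  · intro π hπ
    obtain ⟨hl, β, rfl, h⟩ := mem_topRuns.mp hπ
    rcases List.eq_nil_or_concat' π with rfl | ⟨p, o, rfl⟩
    · simp at hl; omega
    obtain ⟨c₁, hp, ho⟩ := runFrom_concat_iff.mp h
    simp only [List.length_append, List.length_singleton] at hl
    cases ho with
    | repl s z => exact ⟨⟨.inl (s, z), p⟩, by simp [R]; exact ⟨by omega, hp⟩, rfl⟩
    | pop s z => exact ⟨⟨.inr (s, z), p⟩, by simp [R]; exact ⟨by omega, hp⟩, rfl⟩
  · rintro ⟨a, p⟩ ha
    rcases a with ⟨s, z⟩ | ⟨s, z⟩ <;>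
    · simp only [R, mem_sigma, mem_univ, true_and, Sum.elim_inl, Sum.elim_inr, mem_topRuns] at ha
      simp [runWeight_append, runWeight, ha.1, last, show i + 1 + (t - i) = t + 1 by omega]

theorem balWeight_succ [DecidableEq Γ] {i t : ℕ} (hit : i ≤ t) (u : Q) (w : Γ) (r : Q)
    (y : Γ) :
    balWeight Δ i (t + 1) u w r y =
      ∑ s, ∑ z, balWeight Δ i t u w s z * Δ (t + 1) (Op.repl s z r y) +
      ∑ k ∈ Ico i t, ∑ u₁, balWeight Δ i k u w u₁ y *
        ∑ s, ∑ z, pushWeight Δ k t u₁ y s z * Δ (t + 1) (Op.pop s z r) := by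
  rw [balWeight_succ_eq_repl_add_pop Δ hit]
  congr 1
  have hT : ∀ β ∈ ({[y]} : Set (List Γ)), [w].length ≤ β.length := by simp
  simp only [topWeight_eq_sum_pushWeight Δ hT, topWeight_preimage_cons_singleton, ite_mul,
    zero_mul, sum_ite_eq', mem_univ, if_true, sum_sum_mul_assoc]
  rfl

theorem pushWeight_self [DecidableEq Q] [DecidableEq Γ] (t : ℕ) (q : Q) (x : Γ) (r : Q)
    (y : Γ) : pushWeight Δ t (t + 1) q x r y = Δ (t + 1) (Op.push q x r y) := by
  simp [pushWeight, balWeight_self, ite_and]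

theorem pushWeight_succ [DecidableEq Γ] {k t : ℕ} (hkt : k < t) (q : Q) (x : Γ) (r : Q)
    (y : Γ) :
    pushWeight Δ k (t + 1) q x r y =
      ∑ s, ∑ z, pushWeight Δ k t q x s z * Δ (t + 1) (Op.repl s z r y) +
      ∑ j ∈ Ico (k + 1) t, ∑ u, pushWeight Δ k j q x u y *
        ∑ s, ∑ z, pushWeight Δ j t u y s z * Δ (t + 1) (Op.pop s z r) := by
  rw [pushWeight]
  simp only [balWeight_succ Δ (by omega : k + 1 ≤ t), mul_add, sum_add_distrib,
    sum_sum_mul_assoc]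
  rfl

theorem topWeight_univ (q₀ : Q) (bot : Γ) (t : ℕ) (r : Q) (y : Γ) :
    topWeight Δ 0 t (q₀, [bot]) Set.univ r y = balWeight Δ 0 t q₀ bot r y +
      ∑ k ∈ range t, ∑ q, ∑ x,
        topWeight Δ 0 k (q₀, [bot]) Set.univ q x * pushWeight Δ k t q x r y := by
  have hsplit : (Set.univ : Set (List Γ)) = {[]} ∪ {β | β ≠ []} := by
    ext β; simp [em]
  have hT : ∀ β ∈ {β : List Γ | β ≠ []}, [bot].length ≤ β.length := by
    simp [Nat.one_le_iff_ne_zero]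
  rw [hsplit, topWeight_union Δ (by simp), topWeight_eq_sum_pushWeight Δ hT, range_eq_Ico,
    balWeight]
  simp [← hsplit]

theorem finsum_runs_eq_sum_topWeight (c : Q × List Γ) (n : ℕ) :
    ∑ᶠ π ∈ {π : List (Op Q Γ) | π.length = n ∧
        ∃ (r : Q) (y : Γ) (β : List Γ), RunFrom c π (r, y :: β)},
      runWeight Δ 1 π = ∑ r, ∑ y, topWeight Δ 0 n c Set.univ r y := by
  classical
  have hdisj : ((univ : Finset (Q × Γ)) : Set (Q × Γ)).PairwiseDisjoint
      fun a => topRuns n c Set.univ a.1 a.2 := by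
    rintro ⟨r, y⟩ - ⟨r', y'⟩ - hne
    refine disjoint_left.mpr fun π ha hb => hne ?_
    obtain ⟨-, β, -, ha⟩ := mem_topRuns.mp ha
    obtain ⟨-, β', -, hb⟩ := mem_topRuns.mp hb
    cases ha.deterministic hb
    rfl
  have hset : {π : List (Op Q Γ) | π.length = n ∧
      ∃ (r : Q) (y : Γ) (β : List Γ), RunFrom c π (r, y :: β)} =
      univ.biUnion fun a : Q × Γ => topRuns n c Set.univ a.1 a.2 := by
    ext; simp
  rw [hset, finsum_mem_coe_finset, sum_biUnion hdisj, ← Fintype.sum_prod_type']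
  rfl

end Weights

section Tables

open Finset

variable {Q Γ : Type} [Fintype Q] [Fintype Γ] [DecidableEq Q] [DecidableEq Γ] (q₀ : Q)
  (bot : Γ) (Δ : ℕ → Op Q Γ → ℝ)

theorem gamTable_of_le {t N : ℕ} (h : t ≤ N) (I : ℕ) (q : Q) (x : Γ) (r : Q) (y : Γ) :
    gamTable q₀ bot Δ N t I q x r y = gam q₀ bot Δ t I q x r y := by
  induction N with
  | zero => obtain rfl := Nat.le_zero.mp h; rfl
  | succ N ih =>
    rcases h.eq_or_lt with rfl | h
    · rfl
    · simp only [gamTable, h.ne, if_false, ih (Nat.le_of_lt_succ h)]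

theorem gam_succ (t I : ℕ) (q : Q) (x : Γ) (r : Q) (y : Γ) :
    gam q₀ bot Δ (t + 1) I q x r y =
      (if I = t + 1 then Δ (t + 1) (Op.push q x r y) else 0) +
      ∑ s, ∑ z, gam q₀ bot Δ t I q x s z * Δ (t + 1) (Op.repl s z r y) +
      ∑ k ∈ Ico I t, ∑ u, gam q₀ bot Δ k I q x u y *
        ∑ s, ∑ z, gam q₀ bot Δ t (k + 1) u y s z * Δ (t + 1) (Op.pop s z r) := by
  simp only [gam, gamTable, if_true]
  congr 1
  refine sum_congr rfl fun k hk => ?_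
  simp only [gamTable_of_le q₀ bot Δ (mem_Ico.mp hk).2.le]
  rfl

theorem gam_of_lt {t I : ℕ} (h : t < I) (q : Q) (x : Γ) (r : Q) (y : Γ) :
    gam q₀ bot Δ t I q x r y = 0 := by
  induction t generalizing q x r y with
  | zero => simp [gam, gamTable, h.ne']
  | succ t ih =>
    rw [gam_succ, if_neg h.ne', Ico_eq_empty (by omega)]
    simp [ih (by omega)]

theorem gam_succ_eq_pushWeight {k t : ℕ} (hkt : k < t) (q : Q) (x : Γ) (r : Q) (y : Γ) :
    gam q₀ bot Δ t (k + 1) q x r y = pushWeight Δ k t q x r y := by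
  induction t using Nat.strong_induction_on generalizing k q x r y with
  | _ t ih =>
  obtain ⟨t, rfl⟩ : ∃ t', t = t' + 1 := ⟨t - 1, by omega⟩
  rw [gam_succ]
  rcases (Nat.lt_succ_iff.mp hkt).eq_or_lt with rfl | hkt
  · rw [if_pos rfl, pushWeight_self, Ico_eq_empty (by omega)]
    simp [gam_of_lt q₀ bot Δ (Nat.lt_succ_self k)]
  · rw [if_neg (by omega), zero_add, pushWeight_succ Δ hkt]
    congr 1
    · simp only [ih t (by omega) hkt]
    · refine sum_congr rfl fun j hj => ?_
      have hj := mem_Ico.mp hj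
      simp only [ih j (by omega) (by omega : k < j), ih t (by omega) (by omega : j < t)]

theorem gam_zero_eq (t : ℕ) (q : Q) (x : Γ) (r : Q) (y : Γ) :
    gam q₀ bot Δ t 0 q x r y = if q = q₀ ∧ x = bot then balWeight Δ 0 t q x r y else 0 := by
  induction t using Nat.strong_induction_on generalizing r y with
  | _ t ih =>
  rcases t with _ | t
  · simp only [gam, gamTable, balWeight_self, true_and]
    split_ifs <;> simp_all
  rw [gam_succ, if_neg (by omega), zero_add]
  split_ifs with h
  · rw [balWeight_succ Δ (Nat.zero_le t)]
    congr 1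
    · simp only [ih t (by omega), if_pos h]
    · refine sum_congr rfl fun k hk => ?_
      have hk := (mem_Ico.mp hk).2
      simp only [ih k (by omega), if_pos h, gam_succ_eq_pushWeight q₀ bot Δ hk]
  · have hz (k : ℕ) (hk : k < t + 1) (u : Q) (y : Γ) : gam q₀ bot Δ k 0 q x u y = 0 := by
      rw [ih k hk, if_neg h]
    simp only [hz t (by omega), zero_mul, sum_const_zero, zero_add]
    exact sum_eq_zero fun k hk => by simp [hz k (by simp at hk; omega)]

theorem alTable_of_le {J N : ℕ} (h : J ≤ N) (r : Q) (y : Γ) :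
    alTable q₀ bot Δ N J r y = alph q₀ bot Δ J r y := by
  induction N with
  | zero => obtain rfl := Nat.le_zero.mp h; rfl
  | succ N ih =>
    rcases h.eq_or_lt with rfl | h
    · rfl
    · simp only [alTable, h.ne, if_false, ih (Nat.le_of_lt_succ h)]

theorem alph_zero (r : Q) (y : Γ) :
    alph q₀ bot Δ 0 r y = if r = q₀ ∧ y = bot then 1 else 0 := by
  simp [alph, alTable]

theorem alph_succ (t : ℕ) (r : Q) (y : Γ) :
    alph q₀ bot Δ (t + 1) r y =
      ∑ J ∈ range (t + 1), ∑ q, ∑ x, alph q₀ bot Δ J q x * gam q₀ bot Δ t J q x r y := by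
  simp only [alph, alTable, if_true]
  refine sum_congr rfl fun J hJ => ?_
  simp only [alTable_of_le q₀ bot Δ (Nat.le_of_lt_succ (mem_range.mp hJ))]
  rfl

theorem alph_succ_eq_topWeight (t : ℕ) (r : Q) (y : Γ) :
    alph q₀ bot Δ (t + 1) r y = topWeight Δ 0 t (q₀, [bot]) Set.univ r y := by
  induction t using Nat.strong_induction_on generalizing r y with
  | _ t ih =>
  rw [alph_succ q₀ bot Δ, sum_range_succ', topWeight_univ,
    add_comm (balWeight Δ 0 t q₀ bot r y)]
  congr 1
  · refine sum_congr rfl fun j hj => ?_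
    have hj := mem_range.mp hj
    simp only [ih j hj, gam_succ_eq_pushWeight q₀ bot Δ hj]
  · simp [alph_zero, gam_zero_eq, ite_and]

end Tables

theorem alph_correct_general {Q Γ : Type} [Fintype Q] [Fintype Γ] [DecidableEq Q] [DecidableEq Γ]
    (q₀ : Q) (bot : Γ) (Δ : ℕ → Op Q Γ → ℝ)
    (t : ℕ) (r : Q) (y : Γ) :
    alph q₀ bot Δ (t + 1) r y =
      (∑ᶠ π ∈ {π : List (Op Q Γ) | π.length = t ∧
          ∃ β : List Γ, RunFrom (q₀, [bot]) π (r, y :: β)},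
        runWeight Δ 1 π) ∧
    (0 < ∑ r' : Q, ∑ y' : Γ, alph q₀ bot Δ (t + 1) r' y' →
      alph q₀ bot Δ (t + 1) r y / (∑ r' : Q, ∑ y' : Γ, alph q₀ bot Δ (t + 1) r' y') =
        (∑ᶠ π ∈ {π : List (Op Q Γ) | π.length = t ∧
            ∃ β : List Γ, RunFrom (q₀, [bot]) π (r, y :: β)},
          runWeight Δ 1 π) /
        (∑ᶠ π ∈ {π : List (Op Q Γ) | π.length = t ∧
            ∃ (r' : Q) (y' : Γ) (β : List Γ), RunFrom (q₀, [bot]) π (r', y' :: β)},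
          runWeight Δ 1 π)) := by
  refine ⟨by rw [alph_succ_eq_topWeight, finsum_runs_eq_topWeight], fun _ => ?_⟩
  simp only [alph_succ_eq_topWeight, finsum_runs_eq_topWeight, finsum_runs_eq_sum_topWeight]

/-- **Correctness of the forward weights of Lang's algorithm.**  For all `t ≥ 0` and all
`r ∈ Q`, `y ∈ Γ`, the forward weight `α[t][r,y]` (here `alph q₀ bot Δ (t+1) r y` in shifted
indexing) equals the total weight `Σ ψ(π)` over all runs `π` of length `t` starting from the
initial configuration `(q₀, ⊥)` and ending in state `r` with a nonempty stack whose top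
symbol is `y`.  Consequently, whenever the total `Σ_{r',y'} α[t][r',y']` is positive, the
normalized quantity `α[t][r,y] / Σ_{r',y'} α[t][r',y']` equals the fraction of total run
weight carried by runs of length `t` ending in state `r` with top stack symbol `y`. -/
theorem alph_correct {Q Γ : Type} [Fintype Q] [Fintype Γ] [DecidableEq Q] [DecidableEq Γ]
    (q₀ : Q) (bot : Γ) (Δ : ℕ → Op Q Γ → ℝ) (hΔ : ∀ k o, 0 ≤ Δ k o)
    (t : ℕ) (r : Q) (y : Γ) :
    alph q₀ bot Δ (t + 1) r y =
      (∑ᶠ π ∈ {π : List (Op Q Γ) | π.length = t ∧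
          ∃ β : List Γ, RunFrom (q₀, [bot]) π (r, y :: β)},
        runWeight Δ 1 π) ∧
    (0 < ∑ r' : Q, ∑ y' : Γ, alph q₀ bot Δ (t + 1) r' y' →
      alph q₀ bot Δ (t + 1) r y / (∑ r' : Q, ∑ y' : Γ, alph q₀ bot Δ (t + 1) r' y') =
        (∑ᶠ π ∈ {π : List (Op Q Γ) | π.length = t ∧
            ∃ β : List Γ, RunFrom (q₀, [bot]) π (r, y :: β)},
          runWeight Δ 1 π) /
        (∑ᶠ π ∈ {π : List (Op Q Γ) | π.length = t ∧
            ∃ (r' : Q) (y' : Γ) (β : List Γ), RunFrom (q₀, [bot]) π (r', y' :: β)},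
          runWeight Δ 1 π)) :=
  alph_correct_general q₀ bot Δ t r y
end
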